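/- arXiv:1808.02735 — 8 statements merged into one kernel-verified Lean document; each statement's English description precedes it below -/
import Mathlib

section
/- Let β, n, c, d ∈ ℤ satisfy d³ − 3βc²d − nc³ = 1, and set β' = d²β + ncd + β²c² and n' = 6β²d²c + 6c²dβn + n + 2c³n² − 2c³β³. Then 4β'³ − n'² = 4β³ − n². -/
/-- The discriminant `4β³ − n²` is invariant under the transformation
`(β, n) ↦ (β', n')` associated to an integer solution `(c, d)` of
`d³ − 3βc²d − nc³ = 1`. -/
theorem stmt1 (β n c d : ℤ) (h : d ^ 3 - 3 * β * c ^ 2 * d - n * c ^ 3 = 1) :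
    4 * (d ^ 2 * β + n * c * d + β ^ 2 * c ^ 2) ^ 3
      - (6 * β ^ 2 * d ^ 2 * c + 6 * c ^ 2 * d * β * n + n + 2 * c ^ 3 * n ^ 2
          - 2 * c ^ 3 * β ^ 3) ^ 2
      = 4 * β ^ 3 - n ^ 2 := by
  linear_combination (4 * n ^ 3 * c ^ 3 + 12 * β * n ^ 2 * c ^ 2 * d
    + 12 * β ^ 2 * n * c * d ^ 2 + 4 * β ^ 3 + 4 * β ^ 3 * d ^ 3
    - 8 * β ^ 3 * n * c ^ 3 - 12 * β ^ 4 * c ^ 2 * d) * h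
end

section
/- For all integers r₁, r₂, p₁, q₁, p₂, q₂, let γᵢ = rᵢ·(pᵢ³, pᵢ²qᵢ, pᵢqᵢ², qᵢ³) ∈ ℤ⁴ for i = 1, 2. Then χ(γ₁, γ₂) = r₁r₂(p₁q₂ − p₂q₁)³, and Δ(γ₁ + γ₂) = −(r₁r₂)²(p₁q₂ − p₂q₁)⁶ = −χ(γ₁, γ₂)². -/
/-- The Euler pairing on `ℤ⁴ ≅ Γ`:
`χ(v, v') = v₀v₃' − 3v₁v₂' + 3v₂v₁' − v₃v₀'`. -/
def Chi (v w : ℤ × ℤ × ℤ × ℤ) : ℤ :=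
  v.1 * w.2.2.2 - 3 * v.2.1 * w.2.2.1 + 3 * v.2.2.1 * w.2.1 - v.2.2.2 * w.1

/-- The discriminant on `ℤ⁴ ≅ Γ`:
`Δ(v) = −4(v₀v₂³ + v₁³v₃) − v₀²v₃² + 3v₁²v₂² + 6v₀v₁v₂v₃`. -/
def Disc (v : ℤ × ℤ × ℤ × ℤ) : ℤ :=
  -4 * (v.1 * v.2.2.1 ^ 3 + v.2.1 ^ 3 * v.2.2.2) - v.1 ^ 2 * v.2.2.2 ^ 2
    + 3 * v.2.1 ^ 2 * v.2.2.1 ^ 2 + 6 * v.1 * v.2.1 * v.2.2.1 * v.2.2.2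

/-- The semihomogeneous class `r·(p³, p²q, pq², q³) ∈ ℤ⁴`. -/
def sh (p q r : ℤ) : ℤ × ℤ × ℤ × ℤ :=
  (r * p ^ 3, r * p ^ 2 * q, r * p * q ^ 2, r * q ^ 3)

/-- For `γᵢ = rᵢ·(pᵢ³, pᵢ²qᵢ, pᵢqᵢ², qᵢ³)`: the Euler pairing is
`χ(γ₁, γ₂) = r₁r₂(p₁q₂ − p₂q₁)³`, and the discriminant of the sum is
`Δ(γ₁ + γ₂) = −(r₁r₂)²(p₁q₂ − p₂q₁)⁶ = −χ(γ₁, γ₂)²`. -/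
theorem stmt2 (r₁ r₂ p₁ q₁ p₂ q₂ : ℤ) :
    Chi (sh p₁ q₁ r₁) (sh p₂ q₂ r₂) = r₁ * r₂ * (p₁ * q₂ - p₂ * q₁) ^ 3 ∧
    Disc (sh p₁ q₁ r₁ + sh p₂ q₂ r₂) = -(r₁ * r₂) ^ 2 * (p₁ * q₂ - p₂ * q₁) ^ 6 ∧
    -(r₁ * r₂) ^ 2 * (p₁ * q₂ - p₂ * q₁) ^ 6
      = -(Chi (sh p₁ q₁ r₁) (sh p₂ q₂ r₂)) ^ 2 := by
  refine ⟨?_, ?_, ?_⟩ <;> simp [Chi, Disc, sh, Prod.add_def] <;> ring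
end

section
/- Let v ∈ ℤ⁴. (1) If Δ(v) > 0, then v cannot be written as γ₁ + γ₂ with γ₁, γ₂ ∈ 𝒞. (2) If Δ(v) = 0 and v = γ₁ + γ₂ with γ₁, γ₂ ∈ 𝒞, then χ(γ₁, γ₂) = 0. Consequently, if Δ(v) ≥ 0, then v cannot be written as γ₁ + γ₂ with γ₁, γ₂ ∈ 𝒞 and χ(γ₁, γ₂) ≠ 0. -/
/-- The set of semihomogeneous classes
`𝒞 = { r·(p³, p²q, pq², q³) : (p,q,r) ∈ ℤ³, r ≠ 0, gcd(p,q) = 1 } ⊆ ℤ⁴`. -/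
def semihomClasses : Set (ℤ × ℤ × ℤ × ℤ) :=
  {v | ∃ p q r : ℤ, r ≠ 0 ∧ Int.gcd p q = 1 ∧
    v = (r * p ^ 3, r * p ^ 2 * q, r * p * q ^ 2, r * q ^ 3)}

lemma disc_sum (p q r a b s : ℤ) :
    Disc ((r * p ^ 3, r * p ^ 2 * q, r * p * q ^ 2, r * q ^ 3)
      + (s * a ^ 3, s * a ^ 2 * b, s * a * b ^ 2, s * b ^ 3))
      = - r ^ 2 * s ^ 2 * (p * b - q * a) ^ 6 := by
  simp only [Disc, Prod.mk_add_mk, Prod.fst_add, Prod.snd_add]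
  ring

lemma chi_sh (p q r a b s : ℤ) :
    Chi (r * p ^ 3, r * p ^ 2 * q, r * p * q ^ 2, r * q ^ 3)
      (s * a ^ 3, s * a ^ 2 * b, s * a * b ^ 2, s * b ^ 3)
      = r * s * (p * b - q * a) ^ 3 := by
  simp only [Chi]; ring

/-- Lemma 4.6 / Proposition 1.2: (1) if `Δ(v) > 0` then `v` is not a sum of two
semihomogeneous classes; (2) if `Δ(v) = 0` and `v = γ₁ + γ₂` with `γᵢ ∈ 𝒞` then
`χ(γ₁, γ₂) = 0`; consequently if `Δ(v) ≥ 0` then `v` is not a sum of two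
semihomogeneous classes with nonvanishing Euler pairing. -/
theorem stmt4 (v : ℤ × ℤ × ℤ × ℤ) :
    (0 < Disc v →
      ¬ ∃ γ₁ γ₂, γ₁ ∈ semihomClasses ∧ γ₂ ∈ semihomClasses ∧ v = γ₁ + γ₂) ∧
    (Disc v = 0 →
      ∀ γ₁ γ₂, γ₁ ∈ semihomClasses → γ₂ ∈ semihomClasses → v = γ₁ + γ₂ →
        Chi γ₁ γ₂ = 0) ∧
    (0 ≤ Disc v →
      ¬ ∃ γ₁ γ₂, γ₁ ∈ semihomClasses ∧ γ₂ ∈ semihomClasses ∧ v = γ₁ + γ₂ ∧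
        Chi γ₁ γ₂ ≠ 0) := by
  have key : ∀ γ₁ γ₂, γ₁ ∈ semihomClasses → γ₂ ∈ semihomClasses → v = γ₁ + γ₂ →
      Disc v ≤ 0 ∧ (Disc v = 0 → Chi γ₁ γ₂ = 0) := by
    rintro γ₁ γ₂ ⟨p, q, r, hr, -, rfl⟩ ⟨a, b, s, hs, -, rfl⟩ rfl
    rw [disc_sum, chi_sh]
    constructor
    · nlinarith [sq_nonneg (r * s * (p * b - q * a) ^ 3)]
    · intro h
      have ht : (p * b - q * a) = 0 := by
        by_contra ht
        have h6 : 0 < (p * b - q * a) ^ 6 := by positivity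
        have hr2 : 0 < r ^ 2 := by positivity
        have hs2 : 0 < s ^ 2 := by positivity
        have : 0 < r ^ 2 * s ^ 2 * (p * b - q * a) ^ 6 := by positivity
        linarith
      rw [ht]; ring
  refine ⟨?_, ?_, ?_⟩
  · rintro hpos ⟨γ₁, γ₂, h1, h2, hv⟩
    exact absurd (key γ₁ γ₂ h1 h2 hv).1 (by omega)
  · intro h0 γ₁ γ₂ h1 h2 hv
    exact (key γ₁ γ₂ h1 h2 hv).2 h0
  · rintro hge ⟨γ₁, γ₂, h1, h2, hv, hchi⟩
    obtain ⟨hle, h0⟩ := key γ₁ γ₂ h1 h2 hv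
    exact hchi (h0 (le_antisymm hle hge))
end

section
/- Let v ∈ ℤ⁴ and suppose v = γ₁ + γ₂ = γ₁' + γ₂' where γ₁, γ₂, γ₁', γ₂' ∈ 𝒞 satisfy Θ(γ₁) < Θ(γ₂) and Θ(γ₁') < Θ(γ₂'). Then γ₁ = γ₁' and γ₂ = γ₂'. -/
/-- The slope `Θ = q/p ∈ ℚ ∪ {∞}` of a semihomogeneous class with parameters `(p, q)`,
where `Θ = ∞` (the top element) when `p = 0`. -/
def Theta (p q : ℤ) : WithTop ℚ :=
  if p = 0 then ⊤ else ((q : ℚ) / (p : ℚ) : ℚ)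

/-- Two coprime pairs with vanishing cross product agree up to a global sign. -/
lemma prim_prop (a b a' b' : ℤ) (h : Int.gcd a b = 1) (h' : Int.gcd a' b' = 1)
    (hd : a * b' = b * a') : (a' = a ∧ b' = b) ∨ (a' = -a ∧ b' = -b) := by
  rcases eq_or_ne a 0 with ha | ha
  · subst ha
    have hb : b.natAbs = 1 := by simpa [Int.gcd] using h
    have hb0 : b ≠ 0 := by omega
    have ha' : a' = 0 := by
      have : b * a' = 0 := by linarith [hd]
      rcases mul_eq_zero.mp this with h1 | h1
      · exact absurd h1 hb0
      · exact h1
    subst ha'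
    have hb' : b'.natAbs = 1 := by simpa [Int.gcd] using h'
    omega
  · have hc : IsCoprime a b := Int.isCoprime_iff_gcd_eq_one.mpr h
    have hc' : IsCoprime a' b' := Int.isCoprime_iff_gcd_eq_one.mpr h'
    have h1 : a ∣ a' := hc.dvd_of_dvd_mul_left ⟨b', by linarith [hd]⟩
    have h2 : a' ∣ a := hc'.dvd_of_dvd_mul_left ⟨b, by linarith [hd]⟩
    have hna : a'.natAbs = a.natAbs :=
      Nat.dvd_antisymm (Int.natAbs_dvd_natAbs.mpr h2) (Int.natAbs_dvd_natAbs.mpr h1)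
    rcases Int.natAbs_eq_natAbs_iff.mp hna with he | he
    · left
      refine ⟨he, ?_⟩
      have : a * b' = a * b := by rw [hd, he]; ring
      exact (mul_left_cancel₀ ha this.symm).symm
    · right
      refine ⟨he, ?_⟩
      have : a * b' = a * (-b) := by rw [hd, he]; ring
      exact mul_left_cancel₀ ha this
  
/-- Coprime pairs with equal cross products have equal slopes. -/
lemma theta_eq_of_cross (a b c d : ℤ) (hg₁ : Int.gcd a b = 1) (hg₂ : Int.gcd c d = 1)
    (h : a * d = b * c) : Theta a b = Theta c d := by
  rcases eq_or_ne a 0 with ha | ha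
  · have hb : b ≠ 0 := by
      have : b.natAbs = 1 := by subst ha; simpa [Int.gcd] using hg₁
      omega
    have hc : c = 0 := by
      have h0 : b * c = 0 := by rw [← h, ha]; ring
      exact (mul_eq_zero.mp h0).resolve_left hb
    simp [Theta, ha, hc]
  · have hc : c ≠ 0 := by
      intro hc0
      have h0 : a * d = 0 := by rw [h, hc0]; ring
      have hd : d = 0 := (mul_eq_zero.mp h0).resolve_left ha
      rw [hc0, hd] at hg₂
      simp [Int.gcd] at hg₂
    rw [Theta, Theta, if_neg ha, if_neg hc]
    have haQ : (a : ℚ) ≠ 0 := Int.cast_ne_zero.mpr ha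
    have hcQ : (c : ℚ) ≠ 0 := Int.cast_ne_zero.mpr hc
    have : (b : ℚ) / a = (d : ℚ) / c := by
      rw [div_eq_div_iff haQ hcQ]
      exact_mod_cast (by linarith [h] : b * c = d * a)
    exact congrArg (fun x : ℚ => (x : WithTop ℚ)) this

/-- Negating `(p, q)` and `r` simultaneously-ish: `sh (-p) (-q) r = sh p q (-r)`. -/
lemma sh_neg (p q r : ℤ) : sh (-p) (-q) r = sh p q (-r) := by
  simp only [sh, Prod.mk.injEq]
  exact ⟨by ring, by ring, by ring, by ring⟩

/-- Uniqueness of the coefficients in a decomposition with fixed independent directions. -/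
lemma uniq_r (a b c d r₁ r₂ s₁ s₂ : ℤ) (hg₁ : Int.gcd a b = 1) (hg₂ : Int.gcd c d = 1)
    (hdet : a * d - b * c ≠ 0)
    (e0 : r₁ * a ^ 3 + r₂ * c ^ 3 = s₁ * a ^ 3 + s₂ * c ^ 3)
    (e1 : r₁ * a ^ 2 * b + r₂ * c ^ 2 * d = s₁ * a ^ 2 * b + s₂ * c ^ 2 * d)
    (e2 : r₁ * a * b ^ 2 + r₂ * c * d ^ 2 = s₁ * a * b ^ 2 + s₂ * c * d ^ 2)
    (e3 : r₁ * b ^ 3 + r₂ * d ^ 3 = s₁ * b ^ 3 + s₂ * d ^ 3) :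
    r₁ = s₁ ∧ r₂ = s₂ := by
  have h1 : (r₁ - s₁) * a ^ 2 * (a * d - b * c) = 0 := by linear_combination d * e0 - c * e1
  have h2 : (r₁ - s₁) * (a * b) * (a * d - b * c) = 0 := by linear_combination d * e1 - c * e2
  have h3 : (r₁ - s₁) * b ^ 2 * (a * d - b * c) = 0 := by linear_combination d * e2 - c * e3
  have k1 : (r₂ - s₂) * c ^ 2 * (a * d - b * c) = 0 := by linear_combination a * e1 - b * e0
  have k3 : (r₂ - s₂) * d ^ 2 * (a * d - b * c) = 0 := by linear_combination a * e3 - b * e2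
  have ht : r₁ = s₁ := by
    by_contra ht
    have ht' : r₁ - s₁ ≠ 0 := sub_ne_zero.mpr ht
    have ha : a = 0 := by
      have := (mul_eq_zero.mp ((mul_eq_zero.mp h1).resolve_right hdet)).resolve_left ht'
      exact pow_eq_zero_iff (by norm_num) |>.mp this
    have hb : b = 0 := by
      have := (mul_eq_zero.mp ((mul_eq_zero.mp h3).resolve_right hdet)).resolve_left ht'
      exact pow_eq_zero_iff (by norm_num) |>.mp this
    rw [ha, hb] at hg₁
    simp [Int.gcd] at hg₁
  refine ⟨ht, ?_⟩
  by_contra hu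
  have hu' : r₂ - s₂ ≠ 0 := sub_ne_zero.mpr hu
  have hc : c = 0 := by
    have := (mul_eq_zero.mp ((mul_eq_zero.mp k1).resolve_right hdet)).resolve_left hu'
    exact pow_eq_zero_iff (by norm_num) |>.mp this
  have hd : d = 0 := by
    have := (mul_eq_zero.mp ((mul_eq_zero.mp k3).resolve_right hdet)).resolve_left hu'
    exact pow_eq_zero_iff (by norm_num) |>.mp this
  rw [hc, hd] at hg₂
  simp [Int.gcd] at hg₂

/-- Lemma 5.4 (lem:v12): the decomposition of `v ∈ ℤ⁴` as a sum of two semihomogeneous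
classes of distinct ordered slopes is unique. -/
theorem stmt6 (v : ℤ × ℤ × ℤ × ℤ)
    (p₁ q₁ r₁ p₂ q₂ r₂ p₁' q₁' r₁' p₂' q₂' r₂' : ℤ)
    (hr₁ : r₁ ≠ 0) (hr₂ : r₂ ≠ 0) (hr₁' : r₁' ≠ 0) (hr₂' : r₂' ≠ 0)
    (hg₁ : Int.gcd p₁ q₁ = 1) (hg₂ : Int.gcd p₂ q₂ = 1)
    (hg₁' : Int.gcd p₁' q₁' = 1) (hg₂' : Int.gcd p₂' q₂' = 1)
    (hv : v = sh p₁ q₁ r₁ + sh p₂ q₂ r₂)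
    (hv' : v = sh p₁' q₁' r₁' + sh p₂' q₂' r₂')
    (hθ : Theta p₁ q₁ < Theta p₂ q₂)
    (hθ' : Theta p₁' q₁' < Theta p₂' q₂') :
    sh p₁ q₁ r₁ = sh p₁' q₁' r₁' ∧ sh p₂ q₂ r₂ = sh p₂' q₂' r₂' := by
  have key : sh p₁ q₁ r₁ + sh p₂ q₂ r₂ = sh p₁' q₁' r₁' + sh p₂' q₂' r₂' :=
    hv.symm.trans hv'
  simp only [sh, Prod.mk_add_mk, Prod.mk.injEq] at key
  obtain ⟨e0, e1, e2, e3⟩ := key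
  -- determinant nonzero
  have hdet : p₁ * q₂ - q₁ * p₂ ≠ 0 := by
    intro h
    exact hθ.ne (theta_eq_of_cross p₁ q₁ p₂ q₂ hg₁ hg₂ (by linarith))
  have hdet' : p₁' * q₂' - q₁' * p₂' ≠ 0 := by
    intro h
    exact hθ'.ne (theta_eq_of_cross p₁' q₁' p₂' q₂' hg₁' hg₂' (by linarith))
  -- the key kernel identities
  have hQ1 : r₁ * ((p₁ * q₁' - q₁ * p₁') * (p₁ * q₂' - q₁ * p₂')) * (p₁ * q₂ - q₁ * p₂) = 0 := by
    linear_combination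
      (q₂ * q₁' * q₂') * e0 +
      (- q₂ * (p₁' * q₂' + q₁' * p₂') - p₂ * q₁' * q₂') * e1 +
      (q₂ * p₁' * p₂' + p₂ * (p₁' * q₂' + q₁' * p₂')) * e2 +
      (- p₂ * p₁' * p₂') * e3
  have hQ2 : r₂ * ((p₂ * q₁' - q₂ * p₁') * (p₂ * q₂' - q₂ * p₂')) * (p₁ * q₂ - q₁ * p₂) = 0 := by
    linear_combination
      (- q₁ * q₁' * q₂') * e0 +
      (q₁ * (p₁' * q₂' + q₁' * p₂') + p₁ * q₁' * q₂') * e1 +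
      (- q₁ * p₁' * p₂' - p₁ * (p₁' * q₂' + q₁' * p₂')) * e2 +
      (p₁ * p₁' * p₂') * e3
  have hQ1' : (p₁ * q₁' - q₁ * p₁') * (p₁ * q₂' - q₁ * p₂') = 0 :=
    (mul_eq_zero.mp ((mul_eq_zero.mp hQ1).resolve_right hdet)).resolve_left hr₁
  have hQ2' : (p₂ * q₁' - q₂ * p₁') * (p₂ * q₂' - q₂ * p₂') = 0 :=
    (mul_eq_zero.mp ((mul_eq_zero.mp hQ2).resolve_right hdet)).resolve_left hr₂
  rcases mul_eq_zero.mp hQ1' with hA | hA <;> rcases mul_eq_zero.mp hQ2' with hB | hB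
  · -- (p₁,q₁) ∥ (p₁',q₁') and (p₂,q₂) ∥ (p₁',q₁') : contradiction
    exfalso
    have t1 : Theta p₁ q₁ = Theta p₁' q₁' :=
      theta_eq_of_cross p₁ q₁ p₁' q₁' hg₁ hg₁' (by linarith)
    have t2 : Theta p₂ q₂ = Theta p₁' q₁' :=
      theta_eq_of_cross p₂ q₂ p₁' q₁' hg₂ hg₁' (by linarith)
    exact hθ.ne (t1.trans t2.symm)
  · -- good case: (p₁,q₁) ∥ (p₁',q₁') and (p₂,q₂) ∥ (p₂',q₂')
    rcases prim_prop p₁ q₁ p₁' q₁' hg₁ hg₁' (by linarith) with ⟨hp1, hq1⟩ | ⟨hp1, hq1⟩ <;>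
      rcases prim_prop p₂ q₂ p₂' q₂' hg₂ hg₂' (by linarith) with ⟨hp2, hq2⟩ | ⟨hp2, hq2⟩ <;>
      simp only [hp1, hq1, hp2, hq2] at e0 e1 e2 e3 ⊢
    · obtain ⟨u1, u2⟩ := uniq_r p₁ q₁ p₂ q₂ r₁ r₂ r₁' r₂' hg₁ hg₂ hdet
        (by linear_combination e0) (by linear_combination e1)
        (by linear_combination e2) (by linear_combination e3)
      rw [u1, u2]; exact ⟨rfl, rfl⟩
    · obtain ⟨u1, u2⟩ := uniq_r p₁ q₁ p₂ q₂ r₁ r₂ r₁' (-r₂') hg₁ hg₂ hdet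
        (by linear_combination e0) (by linear_combination e1)
        (by linear_combination e2) (by linear_combination e3)
      rw [sh_neg p₂ q₂ r₂', u1, u2]; exact ⟨rfl, rfl⟩
    · obtain ⟨u1, u2⟩ := uniq_r p₁ q₁ p₂ q₂ r₁ r₂ (-r₁') r₂' hg₁ hg₂ hdet
        (by linear_combination e0) (by linear_combination e1)
        (by linear_combination e2) (by linear_combination e3)
      rw [sh_neg p₁ q₁ r₁', u1, u2]; exact ⟨rfl, rfl⟩
    · obtain ⟨u1, u2⟩ := uniq_r p₁ q₁ p₂ q₂ r₁ r₂ (-r₁') (-r₂') hg₁ hg₂ hdet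
        (by linear_combination e0) (by linear_combination e1)
        (by linear_combination e2) (by linear_combination e3)
      rw [sh_neg p₁ q₁ r₁', sh_neg p₂ q₂ r₂', u1, u2]; exact ⟨rfl, rfl⟩
  · -- slope cycle contradiction
    exfalso
    have t1 : Theta p₁ q₁ = Theta p₂' q₂' :=
      theta_eq_of_cross p₁ q₁ p₂' q₂' hg₁ hg₂' (by linarith)
    have t2 : Theta p₂ q₂ = Theta p₁' q₁' :=
      theta_eq_of_cross p₂ q₂ p₁' q₁' hg₂ hg₁' (by linarith)
    have : Theta p₁ q₁ < Theta p₁ q₁ := by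
      calc Theta p₁ q₁ < Theta p₂ q₂ := hθ
        _ = Theta p₁' q₁' := t2
        _ < Theta p₂' q₂' := hθ'
        _ = Theta p₁ q₁ := t1.symm
    exact lt_irrefl _ this
  · -- both ∥ (p₂',q₂') : contradiction
    exfalso
    have t1 : Theta p₁ q₁ = Theta p₂' q₂' :=
      theta_eq_of_cross p₁ q₁ p₂' q₂' hg₁ hg₂' (by linarith)
    have t2 : Theta p₂ q₂ = Theta p₂' q₂' :=
      theta_eq_of_cross p₂ q₂ p₂' q₂' hg₂ hg₂' (by linarith)
    exact hθ.ne (t1.trans t2.symm)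
end

section
/- Let α, β, θ₁, θ₂ be real numbers with α > 0 and θ₁ < θ₂, and set z = (β − θ₁ + iα)³ / (β − θ₂ + iα)³ ∈ ℂ. Then z is a positive real number if and only if (α − (√3/6)(θ₁ − θ₂))² + (β − (θ₁ + θ₂)/2)² = (θ₁ − θ₂)²/3, and z is a negative real number if and only if (α + (√3/6)(θ₁ − θ₂))² + (β − (θ₁ + θ₂)/2)² = (θ₁ − θ₂)²/3. -/
open Complex in
set_option maxHeartbeats 1000000 in
/-- Lemma 5.6 (lem:compute:wall), first case: for `α > 0` and `θ₁ < θ₂`, the quotient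
`z = (β − θ₁ + iα)³ / (β − θ₂ + iα)³` is a positive (resp. negative) real number if and
only if `(α, β)` lies on the circle
`(α ∓ (√3/6)(θ₁ − θ₂))² + (β − (θ₁+θ₂)/2)² = (θ₁ − θ₂)²/3`. -/
theorem stmt8 (α β θ₁ θ₂ : ℝ) (hα : 0 < α) (hθ : θ₁ < θ₂) :
    let z : ℂ := ((β : ℂ) - (θ₁ : ℂ) + (α : ℂ) * Complex.I) ^ 3
      / ((β : ℂ) - (θ₂ : ℂ) + (α : ℂ) * Complex.I) ^ 3
    ((z.im = 0 ∧ 0 < z.re) ↔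
      (α - Real.sqrt 3 / 6 * (θ₁ - θ₂)) ^ 2 + (β - (θ₁ + θ₂) / 2) ^ 2
        = (θ₁ - θ₂) ^ 2 / 3) ∧
    ((z.im = 0 ∧ z.re < 0) ↔
      (α + Real.sqrt 3 / 6 * (θ₁ - θ₂)) ^ 2 + (β - (θ₁ + θ₂) / 2) ^ 2
        = (θ₁ - θ₂) ^ 2 / 3) := by
  intro z
  set s : ℝ := Real.sqrt 3 with hs_def
  have hs2 : s ^ 2 = 3 := Real.sq_sqrt (by norm_num)
  have hs0 : 0 < s := Real.sqrt_pos.mpr (by norm_num)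
  set u : ℝ := (β - θ₁) * (β - θ₂) + α ^ 2 with hu
  set v : ℝ := α * (θ₁ - θ₂) with hv
  have hvneg : v < 0 := mul_neg_of_pos_of_neg hα (by linarith)
  set N : ℝ := (β - θ₂) ^ 2 + α ^ 2 with hN
  have hN0 : 0 < N := by positivity
  have hw2 : ((β : ℂ) - (θ₂ : ℂ) + (α : ℂ) * Complex.I) ≠ 0 := by
    intro h
    have h2 := congrArg Complex.im h
    simp at h2
    linarith
  have hNne : (N : ℂ) ≠ 0 := by
    exact_mod_cast hN0.ne'
  have hw : ((β : ℂ) - (θ₁ : ℂ) + (α : ℂ) * Complex.I)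
      / ((β : ℂ) - (θ₂ : ℂ) + (α : ℂ) * Complex.I)
      = ((u : ℂ) + (v : ℂ) * Complex.I) / (N : ℂ) := by
    rw [div_eq_div_iff hw2 hNne, hu, hv, hN]
    push_cast
    linear_combination (-(α:ℂ)^2 * ((θ₁:ℂ) - (θ₂:ℂ))) * Complex.I_sq
  have hcube : ((u : ℂ) + (v : ℂ) * Complex.I) ^ 3
      = ((u ^ 3 - 3 * u * v ^ 2 : ℝ) : ℂ)
        + ((3 * u ^ 2 * v - v ^ 3 : ℝ) : ℂ) * Complex.I := by
    push_cast
    linear_combination (3 * (u:ℂ) * (v:ℂ) ^ 2 + (v:ℂ) ^ 3 * Complex.I) * Complex.I_sq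
  have hz : z = (((u ^ 3 - 3 * u * v ^ 2 : ℝ) : ℂ)
      + ((3 * u ^ 2 * v - v ^ 3 : ℝ) : ℂ) * Complex.I) / ((N ^ 3 : ℝ) : ℂ) := by
    show (_ / _ : ℂ) = _
    rw [← div_pow, hw, div_pow, hcube]
    push_cast
    ring
  have hre : z.re = (u ^ 3 - 3 * u * v ^ 2) / N ^ 3 := by
    rw [hz, Complex.div_ofReal_re]; simp [← Complex.ofReal_pow]
  have him : z.im = (3 * u ^ 2 * v - v ^ 3) / N ^ 3 := by
    rw [hz, Complex.div_ofReal_im]; simp [← Complex.ofReal_pow]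
  have hN3 : (0:ℝ) < N ^ 3 := pow_pos hN0 3
  have himz : z.im = 0 ↔ 3 * u ^ 2 * v - v ^ 3 = 0 := by
    rw [him, div_eq_zero_iff]
    exact ⟨fun h => h.resolve_right hN3.ne', Or.inl⟩
  have hrepos : 0 < z.re ↔ 0 < u ^ 3 - 3 * u * v ^ 2 := by
    rw [hre]; exact div_pos_iff_of_pos_right hN3
  have hreneg : z.re < 0 ↔ u ^ 3 - 3 * u * v ^ 2 < 0 := by
    rw [hre]
    constructor
    · intro h
      by_contra h'
      exact absurd (div_nonneg (not_lt.mp h') hN3.le) (not_le.mpr h)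
    · intro h
      exact div_neg_of_neg_of_pos h hN3
  have hA : (3 * u ^ 2 * v - v ^ 3 = 0 ∧ 0 < u ^ 3 - 3 * u * v ^ 2) ↔ s * u = v := by
    constructor
    · rintro ⟨h1, h2⟩
      have h3 : (s * u - v) * ((s * u + v) * v) = 0 := by
        linear_combination u ^ 2 * v * hs2 + h1
      rcases mul_eq_zero.mp h3 with h4 | h4
      · linarith
      rcases mul_eq_zero.mp h4 with h5 | h5
      · exfalso
        have hupos : 0 < u := by nlinarith
        have hv2 : v ^ 2 = 3 * u ^ 2 := by
          linear_combination (v - s * u) * h5 + u ^ 2 * hs2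
        nlinarith [pow_pos hupos 3]
      · exact absurd h5 hvneg.ne
    · intro h4
      have hv2 : v ^ 2 = 3 * u ^ 2 := by
        linear_combination (-(v + s * u)) * h4 + u ^ 2 * hs2
      have huneg : u < 0 := by nlinarith
      refine ⟨by linear_combination (-v) * hv2, ?_⟩
      have h8 : u ^ 3 - 3 * u * v ^ 2 = -8 * u ^ 3 := by
        linear_combination (-3 * u) * hv2
      have h9 : u ^ 3 < 0 := Odd.pow_neg ⟨1, by norm_num⟩ huneg
      linarith
  have hB : (3 * u ^ 2 * v - v ^ 3 = 0 ∧ u ^ 3 - 3 * u * v ^ 2 < 0) ↔ s * u = -v := by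
    constructor
    · rintro ⟨h1, h2⟩
      have h3 : (s * u - v) * ((s * u + v) * v) = 0 := by
        linear_combination u ^ 2 * v * hs2 + h1
      rcases mul_eq_zero.mp h3 with h4 | h4
      · exfalso
        have huneg : u < 0 := by nlinarith
        have hv2 : v ^ 2 = 3 * u ^ 2 := by
          linear_combination (-(v + s * u)) * h4 + u ^ 2 * hs2
        have h9 : u ^ 3 < 0 := Odd.pow_neg ⟨1, by norm_num⟩ huneg
        nlinarith
      rcases mul_eq_zero.mp h4 with h5 | h5
      · linarith
      · exact absurd h5 hvneg.ne
    · intro h4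
      have hv2 : v ^ 2 = 3 * u ^ 2 := by
        linear_combination (v - s * u) * h4 + u ^ 2 * hs2
      have hupos : 0 < u := by nlinarith
      refine ⟨by linear_combination (-v) * hv2, ?_⟩
      have h8 : u ^ 3 - 3 * u * v ^ 2 = -8 * u ^ 3 := by
        linear_combination (-3 * u) * hv2
      have h9 : 0 < u ^ 3 := pow_pos hupos 3
      linarith
  have hC1 : (α - s / 6 * (θ₁ - θ₂)) ^ 2 + (β - (θ₁ + θ₂) / 2) ^ 2
      = (θ₁ - θ₂) ^ 2 / 3 ↔ s * u = v := by
    rw [hu, hv]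
    constructor
    · intro h
      linear_combination s * h + (α * (θ₁ - θ₂) / 3 - s * (θ₁ - θ₂) ^ 2 / 36) * hs2
    · intro h
      linear_combination (s / 3) * h
        + ((θ₁ - θ₂) ^ 2 / 36 - ((β - θ₁) * (β - θ₂) + α ^ 2) / 3) * hs2
  have hC2 : (α + s / 6 * (θ₁ - θ₂)) ^ 2 + (β - (θ₁ + θ₂) / 2) ^ 2
      = (θ₁ - θ₂) ^ 2 / 3 ↔ s * u = -v := by
    rw [hu, hv]
    constructor
    · intro h
      linear_combination s * h - (α * (θ₁ - θ₂) / 3 + s * (θ₁ - θ₂) ^ 2 / 36) * hs2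
    · intro h
      linear_combination (s / 3) * h
        + ((θ₁ - θ₂) ^ 2 / 36 - ((β - θ₁) * (β - θ₂) + α ^ 2) / 3) * hs2
  constructor
  · rw [himz, hrepos]
    exact hA.trans hC1.symm
  · rw [himz, hreneg]
    exact hB.trans hC2.symm
end

section
/- Let t ∈ ℝ with t ≠ 0, and let a, b ∈ ℝ. Set α = (√3/2)|t|, q = 3t/4 + 6a/t, and p = t³/8 + 3bt²/4 − 3at. Define Z : ℝ⁴ → ℂ by Z(v) = [−(1/6)(v₃ − (3t/2)v₂ + (3t²/4)v₁ − (t³/8)v₀) + (b/2)(v₂ − tv₁ + (t²/4)v₀) + a(v₁ − (t/2)v₀)] + i[(α/2)(v₂ − tv₁ + (t²/4)v₀) − (α³/6)v₀], and define W : ℝ⁴ → ℂ by W(v) = (−v₃ + qv₂ + pv₀) + i(v₂ − tv₁). Then: (i) there exist real numbers λ₁ > 0, λ₂, and λ₃ > 0 such that Re Z(v) = λ₁ Re W(v) + λ₂ Im W(v) and Im Z(v) = λ₃ Im W(v) for all v ∈ ℝ⁴; (ii) a > t²/24 + |tb|/4 if and only if t(t − q) < p/t < 0. -/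
/-- The central charge `Z^{a,b}_{αH,(t/2)H}` written in the coordinates
`vᵢ = i!·H^{3−i}·chᵢ`, with `α = (√3/2)|t|`. -/
noncomputable def Zcc (t a b : ℝ) (v : ℝ × ℝ × ℝ × ℝ) : ℂ :=
  ⟨-(1 / 6) * (v.2.2.2 - 3 * t / 2 * v.2.2.1 + 3 * t ^ 2 / 4 * v.2.1
        - t ^ 3 / 8 * v.1)
      + b / 2 * (v.2.2.1 - t * v.2.1 + t ^ 2 / 4 * v.1)
      + a * (v.2.1 - t / 2 * v.1),
    (Real.sqrt 3 / 2 * |t|) / 2 * (v.2.2.1 - t * v.2.1 + t ^ 2 / 4 * v.1)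
      - (Real.sqrt 3 / 2 * |t|) ^ 3 / 6 * v.1⟩

/-- The central charge `W(v) = (−v₃ + Qv₂ + Pv₀) + i(v₂ − sv₁)`. -/
def Wcc (s P Q : ℝ) (v : ℝ × ℝ × ℝ × ℝ) : ℂ :=
  ⟨-v.2.2.2 + Q * v.2.2.1 + P * v.1, v.2.2.1 - s * v.2.1⟩

/-- Proposition 3.13 (prop:ZW): with `q = 3t/4 + 6a/t` and `p = t³/8 + 3bt²/4 − 3at`,
the central charge `Z^{a,b}_{(√3/2)|t|H, (t/2)H}` is equivalent to `W_{H,t}^{p,q}`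
(i.e. `Re Z = λ₁ Re W + λ₂ Im W`, `Im Z = λ₃ Im W` with `λ₁, λ₃ > 0`), and the
condition `a > t²/24 + |tb|/4` holds iff `t(t − q) < p/t < 0`. -/
theorem stmt11 (t a b : ℝ) (ht : t ≠ 0) :
    (∃ l₁ l₂ l₃ : ℝ, 0 < l₁ ∧ 0 < l₃ ∧
      ∀ v : ℝ × ℝ × ℝ × ℝ,
        (Zcc t a b v).re
            = l₁ * (Wcc t (t ^ 3 / 8 + 3 * b * t ^ 2 / 4 - 3 * a * t)
                (3 * t / 4 + 6 * a / t) v).re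
              + l₂ * (Wcc t (t ^ 3 / 8 + 3 * b * t ^ 2 / 4 - 3 * a * t)
                (3 * t / 4 + 6 * a / t) v).im ∧
        (Zcc t a b v).im
            = l₃ * (Wcc t (t ^ 3 / 8 + 3 * b * t ^ 2 / 4 - 3 * a * t)
                (3 * t / 4 + 6 * a / t) v).im) ∧
    (a > t ^ 2 / 24 + |t * b| / 4 ↔
      t * (t - (3 * t / 4 + 6 * a / t))
          < (t ^ 3 / 8 + 3 * b * t ^ 2 / 4 - 3 * a * t) / t ∧
        (t ^ 3 / 8 + 3 * b * t ^ 2 / 4 - 3 * a * t) / t < 0) := by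
  have hsq : Real.sqrt 3 ^ 2 = 3 := Real.sq_sqrt (by norm_num)
  have habs : |t| ^ 2 = t ^ 2 := sq_abs t
  have htpos : 0 < |t| := abs_pos.mpr ht
  constructor
  · refine ⟨1 / 6, t / 8 + b / 2 - a / t, Real.sqrt 3 * |t| / 4, by norm_num,
      by positivity, fun v => ⟨?_, ?_⟩⟩
    · simp only [Zcc, Wcc]
      field_simp
      ring
    · simp only [Zcc, Wcc]
      have hcube : (Real.sqrt 3 / 2 * |t|) ^ 3
          = (3 / 4 * t ^ 2) * (Real.sqrt 3 / 2 * |t|) := by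
        have : (Real.sqrt 3 / 2 * |t|) ^ 3
            = (Real.sqrt 3 / 2 * |t|) ^ 2 * (Real.sqrt 3 / 2 * |t|) := by ring
        rw [this, mul_pow, div_pow, hsq, habs]
        ring
      rw [hcube]
      ring
  · have h1 : t * (t - (3 * t / 4 + 6 * a / t)) = t ^ 2 / 4 - 6 * a := by
      field_simp; ring
    have h2 : (t ^ 3 / 8 + 3 * b * t ^ 2 / 4 - 3 * a * t) / t
        = t ^ 2 / 8 + 3 * b * t / 4 - 3 * a := by
      field_simp
    rw [h1, h2]
    constructor
    · intro h
      have habs' : |t * b| < 4 * a - t ^ 2 / 6 := by linarith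
      obtain ⟨ha1, ha2⟩ := abs_lt.mp habs'
      constructor <;> nlinarith [ha1, ha2]
    · rintro ⟨ha1, ha2⟩
      have : |t * b| < 4 * a - t ^ 2 / 6 :=
        abs_lt.mpr ⟨by nlinarith, by nlinarith⟩
      linarith
end

section
/- For s ∈ ℝ \ {0} and P, Q ∈ ℝ, define W_s^{P,Q} : ℝ⁴ → ℂ by W_s^{P,Q}(v) = (−v₃ + Qv₂ + Pv₀) + i(v₂ − sv₁). Let t > 0 and p, q ∈ ℝ satisfy t(t − q) < p/t < 0, and set t' = −1/t, p' = −1/p, q' = tq/p. Let T : ℝ⁴ → ℝ⁴ be the linear map T(v₀, v₁, v₂, v₃) = (v₃, −v₂, v₁, −v₀). Then: (i) p < 0, so −p > 0; (ii) Im(W_t^{p,q}(Tv)) = t · Im(W_{t'}^{p',q'}(v)) and Re(W_t^{p,q}(Tv)) = −p · Re(W_{t'}^{p',q'}(v)) + tq · Im(W_{t'}^{p',q'}(v)) for all v ∈ ℝ⁴; (iii) t' < 0 and t'(t' − q') < p'/t' < 0. -/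
/-- The action `T(v₀,v₁,v₂,v₃) = (v₃, −v₂, v₁, −v₀)` of the Poincaré Fourier–Mukai
transform on the coordinates `vᵢ`. -/
def Tfm (v : ℝ × ℝ × ℝ × ℝ) : ℝ × ℝ × ℝ × ℝ :=
  (v.2.2.2, -v.2.2.1, v.2.1, -v.1)

/-- Proposition 3.15 (prop:W): for `t > 0` and `t(t − q) < p/t < 0`, setting
`t' = −1/t`, `p' = −1/p`, `q' = tq/p`, one has `p < 0`; the pullback of `W_t^{p,q}`
along `T` is equivalent to `W_{t'}^{p',q'}`; and the parameter condition
`t'(t' − q') < p'/t' < 0` holds with `t' < 0`. -/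
theorem stmt12 (t p q : ℝ) (ht : 0 < t)
    (h1 : t * (t - q) < p / t) (h2 : p / t < 0) :
    p < 0 ∧
    (∀ v : ℝ × ℝ × ℝ × ℝ,
      (Wcc t p q (Tfm v)).im = t * (Wcc (-1 / t) (-1 / p) (t * q / p) v).im ∧
      (Wcc t p q (Tfm v)).re
        = -p * (Wcc (-1 / t) (-1 / p) (t * q / p) v).re
          + t * q * (Wcc (-1 / t) (-1 / p) (t * q / p) v).im) ∧
    (-1 / t < 0 ∧
      (-1 / t) * ((-1 / t) - t * q / p) < (-1 / p) / (-1 / t) ∧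
      (-1 / p) / (-1 / t) < 0) := by
  have hp : p < 0 := by
    have := (div_neg_iff.mp h2)
    rcases this with ⟨_, h⟩ | ⟨h, _⟩
    · linarith
    · exact h
  have ht0 : t ≠ 0 := ne_of_gt ht
  have hp0 : p ≠ 0 := ne_of_lt hp
  refine ⟨hp, fun v => ?_, ?_, ?_, ?_⟩
  · constructor <;> (simp only [Wcc, Tfm]; field_simp; ring)
  · exact div_neg_of_neg_of_pos (by norm_num) ht
  · have hA : -1/t*(-1/t - t*q/p) = 1/t^2 + q/p := by field_simp; ring
    have hB : -1/p/(-1/t) = t/p := by field_simp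
    rw [hA, hB]
    have h1' : t*(t-q)*t < p := by rwa [lt_div_iff₀ ht] at h1
    have key : 0 < ((t-q)*t^2 - p)/(p*t^2) :=
      div_pos_of_neg_of_neg (by nlinarith) (mul_neg_of_neg_of_pos hp (by positivity))
    have hd : t/p - (1/t^2 + q/p) = ((t-q)*t^2 - p)/(p*t^2) := by field_simp; ring
    linarith [hd ▸ key]
  · have hB : -1/p/(-1/t) = t/p := by field_simp
    rw [hB]
    exact div_neg_of_pos_of_neg ht hp
end

section
/- The following two statements are equivalent. Statement A: for all integers β, n with (β ≠ 0 or n > 0) such that (1, 0, −β, −n) = γ₁ + γ₂ for some γ₁, γ₂ ∈ 𝒞 with Θ(γ₁) < Θ(γ₂), and for all integers c ≠ 0 and d with d³ − 3βc²d − nc³ = 1, the rational number −d/c does not satisfy Θ(γ₁) < −d/c < Θ(γ₂) (where the condition −d/c < Θ(γ₂) is automatically satisfied when Θ(γ₂) = ∞). Statement B: for all such β, n, γ₁, γ₂, c, d, if Θ(γ₁) ≤ −d/c and −d/c < Θ(γ₂) (the latter automatic when Θ(γ₂) = ∞), then β' = 0 and n' ≤ 0, where β' = d²β + ncd + β²c²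 and n' = 6β²d²c + 6c²dβn + n + 2c³n² − 2c³β³. -/
def symCube (a b e f : ℤ) : ℤ × ℤ × ℤ × ℤ →+ ℤ × ℤ × ℤ × ℤ :=
  AddMonoidHom.mk' (fun v ↦
    (a ^ 3 * v.1 + 3 * a ^ 2 * b * v.2.1 + 3 * a * b ^ 2 * v.2.2.1 + b ^ 3 * v.2.2.2,
     a ^ 2 * e * v.1 + (a ^ 2 * f + 2 * a * b * e) * v.2.1 + (2 * a * b * f + b ^ 2 * e) * v.2.2.1
       + b ^ 2 * f * v.2.2.2,
     a * e ^ 2 * v.1 + (b * e ^ 2 + 2 * a * e * f) * v.2.1 + (2 * b * e * f + a * f ^ 2) * v.2.2.1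
       + b * f ^ 2 * v.2.2.2,
     e ^ 3 * v.1 + 3 * e ^ 2 * f * v.2.1 + 3 * e * f ^ 2 * v.2.2.1 + f ^ 3 * v.2.2.2))
    (fun v w ↦ by simp only [Prod.fst_add, Prod.snd_add, Prod.mk_add_mk]; ext <;> ring)

theorem symCube_sh (a b e f p q r : ℤ) :
    symCube a b e f (sh p q r) = sh (a * p + b * q) (e * p + f * q) r := by
  simp only [symCube, sh, AddMonoidHom.mk'_apply, Prod.mk.injEq]
  refine ⟨?_, ?_, ?_, ?_⟩ <;> ring

def betaPrime (β n c d : ℤ) : ℤ := d ^ 2 * β + n * c * d + β ^ 2 * c ^ 2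

def nPrime (β n c d : ℤ) : ℤ :=
  6 * β ^ 2 * d ^ 2 * c + 6 * c ^ 2 * d * β * n + n + 2 * c ^ 3 * n ^ 2 - 2 * c ^ 3 * β ^ 3

-- `(2βcd + nc², d² - βc²)` is the unique second row of determinant one for which the image of
-- `(1, 0, -β, -n)` again has second coordinate zero.
theorem symCube_rankOne {β n c d : ℤ} (hD : d ^ 3 - 3 * β * c ^ 2 * d - n * c ^ 3 = 1) :
    symCube d c (2 * β * c * d + n * c ^ 2) (d ^ 2 - β * c ^ 2) (1, 0, -β, -n) =
      (1, 0, -betaPrime β n c d, -nPrime β n c d) := by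
  simp only [symCube, betaPrime, nPrime, AddMonoidHom.mk'_apply, Prod.mk.injEq]
  refine ⟨?_, ?_, ?_, ?_⟩
  · linear_combination hD
  · ring
  · linear_combination (-(d ^ 2 * β + n * c * d + β ^ 2 * c ^ 2)) * hD
  · linear_combination (-(n * (d ^ 3 - 3 * β * c ^ 2 * d - n * c ^ 3 + 1) +
      (6 * β ^ 2 * d ^ 2 * c + 6 * c ^ 2 * d * β * n + 2 * c ^ 3 * n ^ 2 - 2 * c ^ 3 * β ^ 3))) * hD

theorem theta_eq_coe_neg_div_iff {p q c d : ℤ} (hpq : IsCoprime p q) (hc : c ≠ 0) :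
    Theta p q = ((-(d : ℚ) / c : ℚ) : WithTop ℚ) ↔ d * p + c * q = 0 := by
  unfold Theta
  split_ifs with hp
  · subst hp
    have hq : q ≠ 0 := (isCoprime_zero_left.mp hpq).ne_zero
    simpa using mul_ne_zero hc hq
  · rw [WithTop.coe_eq_coe, div_eq_div_iff (by exact_mod_cast hp) (by exact_mod_cast hc)]
    have hcast : ((d * p + c * q : ℤ) : ℚ) = d * p + c * q := by push_cast; ring
    constructor <;> intro h
    · exact_mod_cast (show ((d * p + c * q : ℤ) : ℚ) = 0 by rw [hcast]; linarith)
    · rw [h, Int.cast_zero] at hcast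
      linarith

theorem coe_neg_div_lt_theta_iff {p q c d : ℤ} (hc : c ≠ 0) :
    ((-(d : ℚ) / c : ℚ) : WithTop ℚ) < Theta p q ↔ p = 0 ∨ 0 < c * p * (d * p + c * q) := by
  unfold Theta
  split_ifs with hp
  · simp [hp]
  · have hcp : (0 : ℚ) < ((c * p) ^ 2 : ℤ) := by positivity
    have hdiff :
        (q : ℚ) / p - -(d : ℚ) / c = ((c * p * (d * p + c * q) : ℤ) : ℚ) / ((c * p) ^ 2 : ℤ) := by
      push_cast
      field_simp
      ring
    rw [WithTop.coe_lt_coe, ← sub_pos, hdiff, div_pos_iff_of_pos_right hcp]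
    simp only [hp, false_or, Int.cast_pos]

theorem theta_eq_theta_of_mul_eq {p₁ q₁ p₂ q₂ : ℤ} (h₁ : IsCoprime p₁ q₁) (h₂ : IsCoprime p₂ q₂)
    (h : p₁ * q₂ = q₁ * p₂) : Theta p₁ q₁ = Theta p₂ q₂ := by
  by_cases hp₁ : p₁ = 0 <;> by_cases hp₂ : p₂ = 0
  · simp [Theta, hp₁, hp₂]
  · subst hp₁
    have hq₁ : q₁ ≠ 0 := (isCoprime_zero_left.mp h₁).ne_zero
    exact absurd h.symm (by simpa using ⟨hq₁, hp₂⟩)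
  · subst hp₂
    have hq₂ : q₂ ≠ 0 := (isCoprime_zero_left.mp h₂).ne_zero
    exact absurd h (by simpa using ⟨hp₁, hq₂⟩)
  · simp only [Theta, hp₁, hp₂, if_false, WithTop.coe_eq_coe]
    rw [div_eq_div_iff (by exact_mod_cast hp₁) (by exact_mod_cast hp₂)]
    exact_mod_cast (by linarith : q₁ * p₂ = q₂ * p₁)

-- For `v = sh p₁ q₁ r₁ + sh p₂ q₂ r₂` one has `v₀v₂ - v₁² = r₁r₂p₁p₂(p₁q₂ - q₁p₂)²`.
theorem mul_eq_zero_of_sh_add_sh_eq {p₁ q₁ r₁ p₂ q₂ r₂ m : ℤ} (hr₁ : r₁ ≠ 0) (hr₂ : r₂ ≠ 0)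
    (hcross : p₁ * q₂ - q₁ * p₂ ≠ 0)
    (h : ((1, 0, 0, m) : ℤ × ℤ × ℤ × ℤ) = sh p₁ q₁ r₁ + sh p₂ q₂ r₂) : p₁ * p₂ = 0 := by
  simp only [sh, Prod.mk_add_mk, Prod.mk.injEq] at h
  obtain ⟨h₀, h₁, h₂, -⟩ := h
  have hess : r₁ * r₂ * (p₁ * q₂ - q₁ * p₂) ^ 2 * (p₁ * p₂) = 0 := by
    linear_combination (r₁ * p₁ ^ 2 * q₁ + r₂ * p₂ ^ 2 * q₂) * h₁
      - (r₁ * p₁ * q₁ ^ 2 + r₂ * p₂ * q₂ ^ 2) * h₀ - h₂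
  simpa [hr₁, hr₂, hcross] using hess

theorem sh_zero_add_sh_eq {q₁ r₁ p₂ q₂ r₂ x y : ℤ}
    (h : ((1, 0, x, y) : ℤ × ℤ × ℤ × ℤ) = sh 0 q₁ r₁ + sh p₂ q₂ r₂) :
    r₂ * p₂ ^ 3 = 1 ∧ q₂ = 0 ∧ x = 0 ∧ y = r₁ * q₁ ^ 3 := by
  simp only [sh, Prod.mk_add_mk, Prod.mk.injEq] at h
  obtain ⟨h₀, h₁, h₂, h₃⟩ := h
  have hP : r₂ * p₂ ^ 3 = 1 := by linear_combination -h₀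
  have hp₂ : r₂ * p₂ ^ 2 ≠ 0 :=
    left_ne_zero_of_mul (b := p₂) (by rw [mul_assoc, ← pow_succ, hP]; exact one_ne_zero)
  have hq₂ : q₂ = 0 := by simpa [hp₂] using (by linear_combination -h₁ : r₂ * p₂ ^ 2 * q₂ = 0)
  subst hq₂
  exact ⟨hP, rfl, by linear_combination h₂, by linear_combination h₃⟩

theorem cube_add_mul_cube_ne_one {c f N : ℤ} (hcf : 0 < c * f) (hN : 0 < N) :
    f ^ 3 + N * c ^ 3 ≠ 1 := by
  intro h
  rcases pos_and_pos_or_neg_and_neg_of_mul_pos hcf with ⟨hc, hf⟩ | ⟨hc, hf⟩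
  · nlinarith [one_le_pow₀ (n := 3) (show 1 ≤ f by omega),
      one_le_pow₀ (n := 3) (show 1 ≤ c by omega)]
  · nlinarith [one_le_pow₀ (n := 3) (show 1 ≤ -f by omega),
      one_le_pow₀ (n := 3) (show 1 ≤ -c by omega)]

theorem betaPrime_eq_zero_and_nPrime_nonpos {β n p₁ q₁ r₁ p₂ q₂ r₂ c d : ℤ}
    (hβn : β ≠ 0 ∨ 0 < n) (hsum : ((1, 0, -β, -n) : ℤ × ℤ × ℤ × ℤ) = sh p₁ q₁ r₁ + sh p₂ q₂ r₂)
    (hc : c ≠ 0) (hD : d ^ 3 - 3 * β * c ^ 2 * d - n * c ^ 3 = 1) (hP₁ : d * p₁ + c * q₁ = 0)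
    (h₂ : ((-(d : ℚ) / c : ℚ) : WithTop ℚ) < Theta p₂ q₂) :
    betaPrime β n c d = 0 ∧ nPrime β n c d ≤ 0 := by
  have key := congrArg (symCube d c (2 * β * c * d + n * c ^ 2) (d ^ 2 - β * c ^ 2)) hsum
  rw [map_add, symCube_sh, symCube_sh, symCube_rankOne hD, hP₁] at key
  obtain ⟨hP₂, hQ₂, hβ', hn'⟩ := sh_zero_add_sh_eq key
  refine ⟨neg_eq_zero.mp hβ', ?_⟩
  set f := d ^ 2 - β * c ^ 2 with hf
  set P₂ := d * p₂ + c * q₂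
  have hp₁ : p₁ = -(c * ((2 * β * c * d + n * c ^ 2) * p₁ + f * q₁)) := by
    linear_combination f * hP₁ - p₁ * hD
  have hp₂ : p₂ = f * P₂ := by linear_combination (-c) * hQ₂ - p₂ * hD
  have hcube : f ^ 3 + nPrime β n c d * c ^ 3 = 1 := by
    have h₀ := congrArg Prod.fst hsum
    simp only [sh, Prod.fst_add] at h₀
    rw [hp₁, hp₂] at h₀
    linear_combination -h₀ - f ^ 3 * hP₂ - c ^ 3 * hn'
  by_contra! hN
  rcases (coe_neg_div_lt_theta_iff hc).mp h₂ with hp₂0 | hpos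
  · have hβ : β = 0 := by
      rw [hp₂0, add_comm] at hsum
      exact neg_eq_zero.mp (sh_zero_add_sh_eq hsum).2.2.1
    have hf0 : f = 0 := by
      refine (mul_eq_zero.mp (hp₂ ▸ hp₂0)).resolve_right fun h ↦ ?_
      simp [h] at hP₂
    have hd : d = 0 := by simpa [hf, hβ] using hf0
    have hn : 0 < n := hβn.resolve_left (not_not.mpr hβ)
    rw [hf0] at hcube
    subst hβ hd
    have : n + nPrime 0 n c 0 = 0 := by linear_combination -(n * hcube) - nPrime 0 n c 0 * hD
    linarith
  · have hcf : 0 < c * f := by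
      refine pos_of_mul_pos_left (b := P₂ ^ 2) ?_ (sq_nonneg _)
      calc 0 < c * p₂ * P₂ := hpos
        _ = c * f * P₂ ^ 2 := by rw [hp₂]; ring
    exact cube_add_mul_cube_ne_one hcf hN hcube

theorem not_theta_lt_and_lt_theta_of_betaPrime_eq_zero {β n p₁ q₁ r₁ p₂ q₂ r₂ c d : ℤ}
    (hr₁ : r₁ ≠ 0) (hr₂ : r₂ ≠ 0) (hg₁ : IsCoprime p₁ q₁) (hg₂ : IsCoprime p₂ q₂)
    (hsum : ((1, 0, -β, -n) : ℤ × ℤ × ℤ × ℤ) = sh p₁ q₁ r₁ + sh p₂ q₂ r₂)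
    (hc : c ≠ 0) (hD : d ^ 3 - 3 * β * c ^ 2 * d - n * c ^ 3 = 1) (hβ' : betaPrime β n c d = 0) :
    ¬ (Theta p₁ q₁ < ((-(d : ℚ) / c : ℚ) : WithTop ℚ) ∧
        ((-(d : ℚ) / c : ℚ) : WithTop ℚ) < Theta p₂ q₂) := by
  rintro ⟨h₁, h₂⟩
  have key := congrArg (symCube d c (2 * β * c * d + n * c ^ 2) (d ^ 2 - β * c ^ 2)) hsum
  rw [map_add, symCube_sh, symCube_sh, symCube_rankOne hD, hβ', neg_zero] at key
  set e := 2 * β * c * d + n * c ^ 2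
  set f := d ^ 2 - β * c ^ 2
  refine mul_ne_zero ?_ ?_ (mul_eq_zero_of_sh_add_sh_eq hr₁ hr₂ ?_ key)
  · exact fun hP₁ ↦ h₁.ne ((theta_eq_coe_neg_div_iff hg₁ hc).mpr hP₁)
  · exact fun hP₂ ↦ h₂.ne' ((theta_eq_coe_neg_div_iff hg₂ hc).mpr hP₂)
  · have hcross : (d * p₁ + c * q₁) * (e * p₂ + f * q₂) - (e * p₁ + f * q₁) * (d * p₂ + c * q₂)
        = p₁ * q₂ - q₁ * p₂ := by
      linear_combination (p₁ * q₂ - q₁ * p₂) * hD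
    rw [hcross]
    exact sub_ne_zero.mpr fun h ↦ (h₁.trans h₂).ne (theta_eq_theta_of_mul_eq hg₁ hg₂ h)

/-- Lemma 5.10 (conj:equiv): Statement A (Conjecture 5.9: `−d/c` never lies in the
open interval `(Θ(γ₁), Θ(γ₂))`) is equivalent to Statement B (whenever
`Θ(γ₁) ≤ −d/c < Θ(γ₂)`, one has `β' = 0` and `n' ≤ 0`). -/
theorem stmt16 :
    (∀ β n p₁ q₁ r₁ p₂ q₂ r₂ c d : ℤ,
      (β ≠ 0 ∨ 0 < n) →
      r₁ ≠ 0 → r₂ ≠ 0 → Int.gcd p₁ q₁ = 1 → Int.gcd p₂ q₂ = 1 →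
      ((1, 0, -β, -n) : ℤ × ℤ × ℤ × ℤ) = sh p₁ q₁ r₁ + sh p₂ q₂ r₂ →
      Theta p₁ q₁ < Theta p₂ q₂ →
      c ≠ 0 → d ^ 3 - 3 * β * c ^ 2 * d - n * c ^ 3 = 1 →
      ¬ (Theta p₁ q₁ < ((-(d : ℚ) / (c : ℚ) : ℚ) : WithTop ℚ) ∧
          ((-(d : ℚ) / (c : ℚ) : ℚ) : WithTop ℚ) < Theta p₂ q₂))
    ↔
    (∀ β n p₁ q₁ r₁ p₂ q₂ r₂ c d : ℤ,
      (β ≠ 0 ∨ 0 < n) →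
      r₁ ≠ 0 → r₂ ≠ 0 → Int.gcd p₁ q₁ = 1 → Int.gcd p₂ q₂ = 1 →
      ((1, 0, -β, -n) : ℤ × ℤ × ℤ × ℤ) = sh p₁ q₁ r₁ + sh p₂ q₂ r₂ →
      Theta p₁ q₁ < Theta p₂ q₂ →
      c ≠ 0 → d ^ 3 - 3 * β * c ^ 2 * d - n * c ^ 3 = 1 →
      (Theta p₁ q₁ ≤ ((-(d : ℚ) / (c : ℚ) : ℚ) : WithTop ℚ) ∧
          ((-(d : ℚ) / (c : ℚ) : ℚ) : WithTop ℚ) < Theta p₂ q₂) →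
      (d ^ 2 * β + n * c * d + β ^ 2 * c ^ 2 = 0 ∧
        6 * β ^ 2 * d ^ 2 * c + 6 * c ^ 2 * d * β * n + n + 2 * c ^ 3 * n ^ 2
            - 2 * c ^ 3 * β ^ 3 ≤ 0)) := by
  constructor
  · intro hA β n p₁ q₁ r₁ p₂ q₂ r₂ c d hβn hr₁ hr₂ hg₁ hg₂ hsum hθ hc hD ⟨hle, hlt⟩
    have heq := le_antisymm hle <| not_lt.mp fun h ↦
      hA β n p₁ q₁ r₁ p₂ q₂ r₂ c d hβn hr₁ hr₂ hg₁ hg₂ hsum hθ hc hD ⟨h, hlt⟩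
    have hP₁ := (theta_eq_coe_neg_div_iff (Int.isCoprime_iff_gcd_eq_one.mpr hg₁) hc).mp heq
    exact betaPrime_eq_zero_and_nPrime_nonpos hβn hsum hc hD hP₁ hlt
  · intro hB β n p₁ q₁ r₁ p₂ q₂ r₂ c d hβn hr₁ hr₂ hg₁ hg₂ hsum hθ hc hD h
    have hβ' := (hB β n p₁ q₁ r₁ p₂ q₂ r₂ c d hβn hr₁ hr₂ hg₁ hg₂ hsum hθ hc hD ⟨h.1.le, h.2⟩).1
    exact not_theta_lt_and_lt_theta_of_betaPrime_eq_zero hr₁ hr₂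
      (Int.isCoprime_iff_gcd_eq_one.mpr hg₁) (Int.isCoprime_iff_gcd_eq_one.mpr hg₂) hsum hc hD hβ' h
end
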